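/- Let $G$ be an odd cycle on $k = 2\ell+1$ vertices and suppose the canonical module of $R_G$ equals $\omega_{R_G} = (\bigcap_{C\in\mathcal{C}(G)}P_C)\cap P_0 \cap Q_1\cap\dots\cap Q_k$. Then the minimal $t$-degree $a$ with $(\omega_{R_G})_a \ne 0$ is $\ell+1$, and $\dim_K(\omega_{R_G})_{\ell+1} = 1$; i.e., $R_G$ is pseudo-Gorenstein, with the unique monomial of minimal degree being $(x_1\cdots x_k)t^{\ell+1}$. -/

import Mathlib

open MvPolynomial

set_option synthInstance.maxHeartbeats 1000000

noncomputable section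

/-- The ambient polynomial ring `K[x_i : i ∈ V][t]`, with the variable `none` playing
the role of `t`. -/
abbrev Amb (K V : Type*) [CommSemiring K] := MvPolynomial (Option V) K

variable (K : Type*) [Field K] {V : Type*} [DecidableEq V]

/-- The generator `t`. -/
def tGen : Amb K V := X none

/-- The generator `x_i t`. -/
def vGen (i : V) : Amb K V := X (some i) * X none

/-- The generator `x_i x_j t`. -/
def eGen (i j : V) : Amb K V := X (some i) * X (some j) * X none

variable (G : SimpleGraph V)

/-- The toric ring `R_G = K[t, {x_i t}, {x_i x_j t : {i,j} ∈ E(G)}]` of the graph `G`. -/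
def RG : Subalgebra K (Amb K V) :=
  Algebra.adjoin K
    ({tGen K} ∪ Set.range (vGen K (V := V)) ∪ {p | ∃ i j, G.Adj i j ∧ p = eGen K i j})

/-- The faces of the one-dimensional simplicial complex attached to `G`. -/
def IsFace (F : Finset V) : Prop :=
  F = ∅ ∨ (∃ i, F = {i}) ∨ ∃ i j, G.Adj i j ∧ F = {i, j}

/-- The monomial `x_F t`. -/
def faceMon (F : Finset V) : Amb K V := (∏ i ∈ F, X (some i)) * X none

/-- The ideal `P_0 = (t, x_1 t, …, x_n t)` of `R_G`. -/
def P0 : Ideal (RG K G) :=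
  Ideal.span {u : RG K G | ((u : Amb K V) = tGen K) ∨ ∃ i, (u : Amb K V) = vGen K i}

/-- The principal ideal `(t)` of `R_G`. -/
def tIdeal : Ideal (RG K G) := Ideal.span {u : RG K G | (u : Amb K V) = tGen K}

/-- The ideal `P_C` generated by the monomials `x_F t` for faces `F ⊆ C`. -/
def PC (C : Finset V) : Ideal (RG K G) :=
  Ideal.span {u : RG K G | ∃ F : Finset V, IsFace G F ∧ F ⊆ C ∧ (u : Amb K V) = faceMon K F}

/-- The ideal `Q_i` generated by the monomials `x_F t` for faces `F ∋ i`. -/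
def Qi (i : V) : Ideal (RG K G) :=
  Ideal.span {u : RG K G | ∃ F : Finset V, IsFace G F ∧ i ∈ F ∧ (u : Amb K V) = faceMon K F}

/-- A vertex cover of `G`. -/
def IsVertexCover (C : Finset V) : Prop := ∀ ⦃i j⦄, G.Adj i j → i ∈ C ∨ j ∈ C

/-- A minimal vertex cover of `G`. -/
def IsMinVertexCover (C : Finset V) : Prop :=
  IsVertexCover G C ∧ ∀ C' ⊆ C, IsVertexCover G C' → C' = C

/-- An induced odd cycle of `G`, given by an injective cyclic enumeration of its
vertices such that adjacency holds exactly between consecutive vertices. -/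
def IsInducedOddCycle {V : Type*} (G : SimpleGraph V) (m : ℕ) (c : ZMod m → V) : Prop :=
  3 ≤ m ∧ Odd m ∧ Function.Injective c ∧
    ∀ p q : ZMod m, G.Adj (c p) (c q) ↔ (q = p + 1 ∨ p = q + 1)

/-- The monomial `x^a t^b` of the ambient ring. -/
def monom [Fintype V] (a : V → ℕ) (b : ℕ) : Amb K V :=
  (∏ i, X (some i) ^ a i) * X none ^ b

/-- An element of `R_G` which is a monomial. -/
def IsMonomialElt [Fintype V] (u : RG K G) : Prop :=
  ∃ (a : V → ℕ) (b : ℕ), (u : Amb K V) = monom K a b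

/-- A monomial ideal of `R_G`. -/
def IsMonomialIdeal [Fintype V] (I : Ideal (RG K G)) : Prop :=
  ∃ S : Set (RG K G), (∀ u ∈ S, IsMonomialElt K G u) ∧ I = Ideal.span S

/-- A height one ideal of the domain `R_G`: a nonzero prime all of whose properly
contained primes are zero. -/
def HeightOne (I : Ideal (RG K G)) : Prop :=
  I.IsPrime ∧ I ≠ ⊥ ∧ ∀ J : Ideal (RG K G), J.IsPrime → J < I → J = ⊥

/-- The ideal contains the element `t`. -/
def ContainsT (I : Ideal (RG K G)) : Prop := ∃ u ∈ I, (u : Amb K V) = tGen K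

/-- The canonical ideal of `R_G` (for `R_G` normal): the intersection of all height one
monomial prime ideals. -/
def canonicalIdeal [Fintype V] : Ideal (RG K G) :=
  sInf {P : Ideal (RG K G) | HeightOne K G P ∧ IsMonomialIdeal K G P}

/-- `R_G` is Gorenstein: the canonical ideal (= canonical module) is isomorphic to
`R_G` as an `R_G`-module, equivalently it is a principal ideal, i.e. the canonical
class vanishes. -/
def IsGorensteinToric [Fintype V] : Prop :=
  (canonicalIdeal K G).IsPrincipal

/-- The cycle graph `C_k` on `ZMod k`. -/
def cycleG (k : ℕ) : SimpleGraph (ZMod k) where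
  Adj i j := i ≠ j ∧ (j = i + 1 ∨ i = j + 1)
  symm := ⟨by rintro i j ⟨h1, h2⟩; exact ⟨h1.symm, h2.symm⟩⟩
  loopless := ⟨by rintro i ⟨h1, _⟩; exact h1 rfl⟩

/-- The canonical module of `R_{C_k}`:
`ω = (⋂_{C ∈ 𝒞(G)} P_C) ∩ P₀ ∩ Q₁ ∩ ⋯ ∩ Q_k`. -/
def omegaCycle (K : Type*) [Field K] (k : ℕ) : Ideal (RG K (cycleG k)) :=
  (⨅ C ∈ {C : Finset (ZMod k) | IsMinVertexCover (cycleG k) C}, PC K (cycleG k) C) ⊓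
    P0 K (cycleG k) ⊓ ⨅ i, Qi K (cycleG k) i

/-!
Every monomial `x^a t^b` of `R_G` satisfies `∑ w_i a_i ≤ c b` for each vertex weight `w` with
`w_i ≤ c` and `w_i + w_j ≤ c` on edges: the generators do, and the condition is additive in the
exponents. Membership in `Q_i` forces `a_i ≥ 1`, so the weight `w = 1`, `c = 2` gives
`2ℓ + 1 ≤ ∑ a_i ≤ 2b`. If `b = ℓ + 1` and `a_{i₀} ≥ 2`, the independent set
`S = {i₀, i₀ + 2, …, i₀ + 2ℓ - 2}` has a minimal vertex cover `C` as complement; writing the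
monomial as `x_F t` with `F ⊆ C` times a monomial of `R_G` and using the weight `1_S`, `c = 1`
gives `∑_{i ∈ S} a_i ≤ ℓ < ℓ + 1 ≤ ∑_{i ∈ S} a_i`. Finally, `w₀ = (x_1 ⋯ x_k) t^{ℓ+1}` lies in
`P₀` and in every `Q_v`, being `x_v t` times the edges `x_i x_j t` of a perfect matching of
`C_k - v`; and it lies in every `P_C`, since a vertex cover of an odd cycle contains an edge
`{v, v + 1}`, which is the last edge of the matching of `C_k - (v + 2)`.
-/

namespace MvPolynomial

variable {R σ : Type*} [CommSemiring R]

def weightLESubalgebra (φ ψ : (σ →₀ ℕ) →+ ℕ) : Subalgebra R (MvPolynomial σ R) where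
  carrier := {p | ∀ m ∈ p.support, φ m ≤ ψ m}
  mul_mem' {p q} hp hq m hm := by
    classical
    obtain ⟨m₁, h₁, m₂, h₂, rfl⟩ := Finset.mem_add.mp (support_mul p q hm)
    rw [map_add, map_add]
    exact add_le_add (hp m₁ h₁) (hq m₂ h₂)
  add_mem' hp hq m hm := by
    classical
    exact (Finset.mem_union.mp (support_add hm)).elim (hp m) (hq m)
  algebraMap_mem' r m hm := by
    classical
    rw [algebraMap_eq, ← monomial_zero'] at hm
    simp [Finset.mem_singleton.mp (support_monomial_subset hm)]

theorem monomial_mem_weightLESubalgebra {φ ψ : (σ →₀ ℕ) →+ ℕ} {e : σ →₀ ℕ} (h : φ e ≤ ψ e)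
    (r : R) : monomial e r ∈ weightLESubalgebra φ ψ := fun m hm => by
  classical
  rwa [Finset.mem_singleton.mp (support_monomial_subset hm)]

theorem exists_add_mem_support_of_mem_span {A : Subalgebra R (MvPolynomial σ R)} {S : Set A}
    (hS : ∀ s ∈ S, ∃ e, (s : MvPolynomial σ R) = monomial e 1) {u : A}
    (hu : u ∈ Ideal.span S) {m : σ →₀ ℕ} (hm : m ∈ (u : MvPolynomial σ R).support) :
    ∃ s ∈ S, ∃ e, (s : MvPolynomial σ R) = monomial e 1 ∧
      ∃ r : A, ∃ m' ∈ (r : MvPolynomial σ R).support, m = e + m' := by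
  classical
  obtain ⟨c, hcS, rfl⟩ := Submodule.mem_span_set.mp hu
  simp only [Finsupp.sum, smul_eq_mul, mem_support_iff] at hm
  push_cast at hm
  rw [coeff_sum] at hm
  obtain ⟨s, hs, hne⟩ := Finset.exists_ne_zero_of_sum_ne_zero hm
  obtain ⟨e, he⟩ := hS s (hcS hs)
  rw [he, coeff_mul_monomial'] at hne
  split_ifs at hne with hle
  · exact ⟨s, hcS hs, e, he, c s, m - e, by simpa using hne, (add_tsub_cancel_of_le hle).symm⟩
  · exact absurd rfl hne

end MvPolynomial

theorem Subalgebra.mem_span_of_coe_eq_mul {R B : Type*} [CommSemiring R] [CommSemiring B]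
    [Algebra R B] {A : Subalgebra R B} {S : Set A} {u s : A} (hs : s ∈ S) {r : B} (hr : r ∈ A)
    (h : (u : B) = s * r) :
    u ∈ Ideal.span S := by
  have hu : u = ⟨r, hr⟩ * s := Subtype.ext (h.trans (mul_comm _ _))
  exact hu ▸ Ideal.mul_mem_left _ _ (Ideal.subset_span hs)

section ToricRing

variable {K : Type*} [Field K] {V : Type*} {G : SimpleGraph V}

theorem tGen_eq_faceMon : tGen K = faceMon K (∅ : Finset V) := by
  rw [tGen, faceMon, Finset.prod_empty, one_mul]

theorem vGen_eq_faceMon (i : V) : vGen K i = faceMon K {i} := by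
  rw [vGen, faceMon, Finset.prod_singleton]

theorem eGen_eq_faceMon [DecidableEq V] {i j : V} (h : i ≠ j) : eGen K i j = faceMon K {i, j} := by
  rw [eGen, faceMon, Finset.prod_pair h]

theorem vGen_mem_RG (i : V) : vGen K i ∈ RG K G :=
  Algebra.subset_adjoin (Or.inl (Or.inr ⟨i, rfl⟩))

theorem eGen_mem_RG {i j : V} (h : G.Adj i j) : eGen K i j ∈ RG K G :=
  Algebra.subset_adjoin (Or.inr ⟨i, j, h, rfl⟩)

variable [Fintype V]

def monomExp (a : V → ℕ) (b : ℕ) : Option V →₀ ℕ :=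
  Finsupp.equivFunOnFinite.symm (Option.elim' b a)

@[simp]
theorem monomExp_none (a : V → ℕ) (b : ℕ) : monomExp a b none = b := rfl

@[simp]
theorem monomExp_some (a : V → ℕ) (b : ℕ) (i : V) : monomExp a b (some i) = a i := rfl

theorem monom_eq_monomial (a : V → ℕ) (b : ℕ) : monom K a b = monomial (monomExp a b) 1 := by
  rw [monom, monomial_eq, Finsupp.prod_fintype _ _ fun _ => pow_zero _, Fintype.prod_option,
    C_1, one_mul, mul_comm]
  rfl

theorem weight_monomExp (W : Option V → ℕ) (a : V → ℕ) (b : ℕ) :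
    Finsupp.weight W (monomExp a b) = b * W none + ∑ i, a i * W (some i) := by
  simp [Finsupp.weight_eq_sum, Fintype.sum_option]

theorem faceMon_eq_monom [DecidableEq V] (F : Finset V) :
    faceMon K F = monom K (fun i => if i ∈ F then 1 else 0) 1 := by
  simp only [faceMon, monom, pow_ite, pow_one, pow_zero, Finset.prod_ite_mem, Finset.univ_inter]

theorem RG_le_weightLESubalgebra (w : V → ℕ) (c : ℕ) (hv : ∀ i, w i ≤ c)
    (he : ∀ i j, G.Adj i j → w i + w j ≤ c) :
    RG K G ≤ weightLESubalgebra (Finsupp.weight (Option.elim' 0 w))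
      (Finsupp.weight (Option.elim' c 0)) := by
  classical
  have hface : ∀ F : Finset V, ∑ i ∈ F, w i ≤ c →
      faceMon K F ∈ weightLESubalgebra (Finsupp.weight (Option.elim' 0 w))
        (Finsupp.weight (Option.elim' c 0)) := fun F hF => by
    rw [faceMon_eq_monom, monom_eq_monomial]
    refine monomial_mem_weightLESubalgebra ?_ 1
    simpa [weight_monomExp, ite_mul, Finset.sum_ite_mem] using hF
  refine Algebra.adjoin_le ?_
  rintro _ ((rfl | ⟨i, rfl⟩) | ⟨i, j, hij, rfl⟩)
  · rw [tGen_eq_faceMon]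
    exact hface ∅ (by simp)
  · rw [vGen_eq_faceMon]
    exact hface {i} (by simpa using hv i)
  · rw [eGen_eq_faceMon hij.ne]
    exact hface {i, j} (by simpa [Finset.sum_pair hij.ne] using he i j hij)

theorem monomExp_mem_support (a : V → ℕ) (b : ℕ) : monomExp a b ∈ (monom K a b).support := by
  classical
  rw [monom_eq_monomial, mem_support_iff, coeff_monomial, if_pos rfl]
  exact one_ne_zero

theorem sum_mul_le_of_monom_mem_RG {w : V → ℕ} {c : ℕ} (hv : ∀ i, w i ≤ c)
    (he : ∀ i j, G.Adj i j → w i + w j ≤ c) {a : V → ℕ} {b : ℕ} (h : monom K a b ∈ RG K G) :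
    ∑ i, a i * w i ≤ b * c := by
  have := RG_le_weightLESubalgebra w c hv he h (monomExp a b) (monomExp_mem_support a b)
  simpa [weight_monomExp] using this

theorem exists_faceExp_add_of_mem_span [DecidableEq V] {P : Finset V → Prop} {u : RG K G}
    (hu : u ∈ Ideal.span {u : RG K G | ∃ F, IsFace G F ∧ P F ∧ (u : Amb K V) = faceMon K F})
    {a : V → ℕ} {b : ℕ} (hab : (u : Amb K V) = monom K a b) :
    ∃ F, P F ∧ ∃ r : RG K G, ∃ m ∈ (r : Amb K V).support,
      monomExp a b = monomExp (fun i => if i ∈ F then 1 else 0) 1 + m := by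
  obtain ⟨s, ⟨F, -, hPF, hsF⟩, e, hse, r, m, hm, hexp⟩ :=
    exists_add_mem_support_of_mem_span
      (fun s hs => by
        obtain ⟨F, -, -, hsF⟩ := hs
        exact ⟨_, by rw [hsF, faceMon_eq_monom, monom_eq_monomial]⟩) hu
      (hab ▸ monomExp_mem_support a b)
  rw [hsF, faceMon_eq_monom, monom_eq_monomial] at hse
  obtain rfl := monomial_left_injective one_ne_zero hse
  exact ⟨F, hPF, r, m, hm, hexp⟩

theorem one_le_of_mem_Qi [DecidableEq V] {u : RG K G} {i : V} (hu : u ∈ Qi K G i) {a : V → ℕ}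
    {b : ℕ} (hab : (u : Amb K V) = monom K a b) : 1 ≤ a i := by
  obtain ⟨F, hiF, -, m, -, hexp⟩ := exists_faceExp_add_of_mem_span hu hab
  have := congrArg (· (some i)) hexp
  simp only [monomExp_some, Finsupp.add_apply, if_pos hiF] at this
  omega

theorem sum_lt_of_mem_PC_compl [DecidableEq V] {S : Finset V} (hS : IsVertexCover G Sᶜ)
    {u : RG K G} (hu : u ∈ PC K G Sᶜ) {a : V → ℕ} {b : ℕ}
    (hab : (u : Amb K V) = monom K a b) : ∑ i ∈ S, a i < b := by
  obtain ⟨F, hFS, r, m, hm, hexp⟩ := exists_faceExp_add_of_mem_span hu hab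
  have hw := RG_le_weightLESubalgebra (fun i => if i ∈ S then 1 else 0) 1
    (fun i => by split_ifs <;> simp)
    (fun i j hij => by rcases hS hij with h | h <;> simp_all <;> split_ifs <;> simp) r.2 m hm
  have hx := congrArg (Finsupp.weight (Option.elim' 0 fun i => if i ∈ S then 1 else 0)) hexp
  have ht := congrArg (Finsupp.weight (Option.elim' 1 0)) hexp
  simp only [weight_monomExp, Option.elim'_none, mul_zero, Option.elim'_some, mul_ite, mul_one,
    Finset.sum_ite_mem, Finset.univ_inter, zero_add, map_add, Finset.sum_const, smul_eq_mul,
    Pi.zero_apply, add_zero] at hx ht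
  rw [Finset.disjoint_iff_inter_eq_empty.mp (Finset.subset_compl_iff_disjoint_left.mp hFS),
    Finset.card_empty, zero_add] at hx
  omega

end ToricRing

theorem isMinVertexCover_compl {V : Type*} [Fintype V] [DecidableEq V] {G : SimpleGraph V}
    {S : Finset V} (hS : G.IsIndepSet (S : Set V)) (hdom : ∀ v ∉ S, ∃ s ∈ S, G.Adj v s) :
    IsMinVertexCover G Sᶜ := by
  refine ⟨fun i j hij => ?_, fun C hCS hC => hCS.antisymm fun v hv => ?_⟩
  · by_contra! h
    simp only [Finset.mem_compl, not_not] at h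
    exact hS h.1 h.2 hij.ne hij
  · obtain ⟨s, hs, hvs⟩ := hdom v (Finset.mem_compl.mp hv)
    exact (hC hvs).resolve_right fun hsC => Finset.mem_compl.mp (hCS hsC) hs

section OddCycle

open Finset

theorem Finset.prod_range_two_mul {M : Type*} [CommMonoid M] (f : ℕ → M) (n : ℕ) :
    ∏ i ∈ range (2 * n), f i = ∏ j ∈ range n, f (2 * j) * f (2 * j + 1) := by
  induction n with
  | zero => simp
  | succ n ih => rw [Nat.mul_succ, prod_range_succ, prod_range_succ, ih, prod_range_succ, mul_assoc]

theorem ZMod.prod_eq_prod_range_add {M : Type*} [CommMonoid M] {k : ℕ} [NeZero k]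
    (f : ZMod k → M) (v : ZMod k) : ∏ i, f i = ∏ n ∈ range k, f (v + n) :=
  prod_nbij' (fun i => (i - v).val) (fun n => v + n) (by simp [ZMod.val_lt]) (by simp)
    (by simp) (fun n hn => by simp [ZMod.val_natCast_of_lt (mem_range.mp hn)]) (by simp)

variable {K : Type*} [Field K] {ℓ : ℕ}

theorem ZMod.prod_eq_mul_prod_pairs {M : Type*} [CommMonoid M] (f : ZMod (2 * ℓ + 1) → M)
    (v : ZMod (2 * ℓ + 1)) :
    ∏ i, f i = f v * ∏ j ∈ range ℓ, f (v + 2 * j + 1) * f (v + 2 * j + 2) := by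
  rw [ZMod.prod_eq_prod_range_add f v, prod_range_succ', prod_range_two_mul, mul_comm]
  push_cast
  simp only [add_zero, add_assoc, one_add_one_eq_two]

theorem cycleG_adj_add_one {k : ℕ} (hk : k ≠ 1) (v : ZMod k) : (cycleG k).Adj v (v + 1) :=
  ⟨fun h => hk (ZMod.one_eq_zero_iff.mp (by simpa using h.symm)), Or.inl rfl⟩

theorem exists_add_one_mem_of_isVertexCover {k : ℕ} (hk : k ≠ 1) (hodd : Odd k)
    {C : Finset (ZMod k)} (hC : IsVertexCover (cycleG k) C) : ∃ v ∈ C, v + 1 ∈ C := by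
  by_contra! h
  have hstep : ∀ v : ZMod k, v + 1 ∈ C ↔ v ∉ C := fun v =>
    ⟨fun h1 h0 => h v h0 h1, fun h0 => (hC (cycleG_adj_add_one hk v)).resolve_left h0⟩
  have hparity : ∀ n : ℕ, (n : ZMod k) ∈ C ↔ (Even n ↔ (0 : ZMod k) ∈ C) := by
    intro n
    induction n with
    | zero => simp
    | succ n ih =>
      rw [Nat.cast_succ, hstep, ih, Nat.even_add_one]
      tauto
  have := hparity k
  rw [ZMod.natCast_self] at this
  have := Nat.not_even_iff_odd.mpr hodd
  tauto

theorem exists_mem_card_eq_isMinVertexCover_compl (hl : 1 ≤ ℓ) (i₀ : ZMod (2 * ℓ + 1)) :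
    ∃ S : Finset (ZMod (2 * ℓ + 1)), i₀ ∈ S ∧ S.card = ℓ ∧
      IsMinVertexCover (cycleG (2 * ℓ + 1)) Sᶜ := by
  have hinj : ∀ {x y : ℕ}, x < 2 * ℓ + 1 → y < 2 * ℓ + 1 →
      i₀ + (x : ZMod (2 * ℓ + 1)) = i₀ + y → x = y := fun hx hy h => by
    simpa [Nat.mod_eq_of_lt hx, Nat.mod_eq_of_lt hy] using
      (ZMod.natCast_eq_natCast_iff' _ _ _).mp (add_left_cancel h)
  have hmem : ∀ v, v ∈ (range ℓ).image (fun j => i₀ + ((2 * j : ℕ) : ZMod (2 * ℓ + 1))) ↔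
      ∃ j < ℓ, i₀ + ((2 * j : ℕ) : ZMod (2 * ℓ + 1)) = v := by
    simp
  refine ⟨(range ℓ).image fun j => i₀ + ((2 * j : ℕ) : ZMod (2 * ℓ + 1)),
    (hmem i₀).mpr ⟨0, hl, by simp⟩, ?_, isMinVertexCover_compl ?_ fun v hv => ?_⟩
  · rw [card_image_of_injOn fun x hx y hy h => ?_, card_range]
    have := hinj (by simp at hx; omega) (by simp at hy; omega) h
    omega
  · intro x hx y hy hne hadj
    obtain ⟨j, hj, rfl⟩ := (hmem x).mp hx
    obtain ⟨j', hj', rfl⟩ := (hmem y).mp hy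
    rcases hadj.2 with h | h
    · have := hinj (x := 2 * j') (y := 2 * j + 1) (by omega) (by omega) (by rw [h]; push_cast; ring)
      omega
    · have := hinj (x := 2 * j) (y := 2 * j' + 1) (by omega) (by omega) (by rw [h]; push_cast; ring)
      omega
  · have hv' : i₀ + (((v - i₀).val : ℕ) : ZMod (2 * ℓ + 1)) = v := by simp
    have hlt := ZMod.val_lt (v - i₀)
    rw [hmem] at hv
    push Not at hv
    obtain ⟨j, hj | hj⟩ := Nat.even_or_odd' (v - i₀).val
    · have hjl : j = ℓ := by
        by_contra hne
        exact hv j (by omega) (by rw [← hj, hv'])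
      refine ⟨i₀, (hmem i₀).mpr ⟨0, hl, by simp⟩, ?_⟩
      have hk : ((2 * ℓ + 1 : ℕ) : ZMod (2 * ℓ + 1)) = 0 := ZMod.natCast_self _
      have hv₁ : v + 1 = i₀ := by
        rw [← hv', hj, hjl]
        push_cast at hk ⊢
        linear_combination hk
      exact hv₁ ▸ cycleG_adj_add_one (by omega) v
    · refine ⟨i₀ + ((2 * j : ℕ) : ZMod (2 * ℓ + 1)), (hmem _).mpr ⟨j, by omega, rfl⟩, ?_⟩
      have hv₁ : i₀ + ((2 * j : ℕ) : ZMod (2 * ℓ + 1)) + 1 = v := by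
        rw [← hv', hj]
        push_cast
        ring
      exact (hv₁ ▸ cycleG_adj_add_one (by omega) _).symm

theorem prod_eGen_mem_RG {k : ℕ} (hk : k ≠ 1) (v : ZMod k) (n : ℕ) :
    ∏ j ∈ range n, eGen K (v + 2 * j + 1) (v + 2 * j + 2) ∈ RG K (cycleG k) :=
  prod_mem fun j _ => by
    rw [show v + 2 * j + 2 = v + 2 * j + 1 + 1 by ring]
    exact eGen_mem_RG (cycleG_adj_add_one hk _)

theorem monom_one_eq_vGen_mul_prod (v : ZMod (2 * ℓ + 1)) :
    monom K (fun _ => 1) (ℓ + 1) =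
      vGen K v * ∏ j ∈ range ℓ, eGen K (v + 2 * j + 1) (v + 2 * j + 2) := by
  simp only [monom, vGen, eGen, pow_one, ZMod.prod_eq_mul_prod_pairs (fun i => X (some i)) v,
    prod_mul_distrib, prod_const, card_range]
  ring

theorem exists_monom_one_eq_vGen_mul (hl : 1 ≤ ℓ) (v : ZMod (2 * ℓ + 1)) :
    ∃ r ∈ RG K (cycleG (2 * ℓ + 1)), monom K (fun _ => 1) (ℓ + 1) = vGen K v * r :=
  ⟨_, prod_eGen_mem_RG (by omega) v ℓ, monom_one_eq_vGen_mul_prod v⟩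

theorem exists_monom_one_eq_eGen_mul (hl : 1 ≤ ℓ) (v : ZMod (2 * ℓ + 1)) :
    ∃ r ∈ RG K (cycleG (2 * ℓ + 1)), monom K (fun _ => 1) (ℓ + 1) = eGen K v (v + 1) * r := by
  obtain ⟨m, rfl⟩ : ∃ m, ℓ = m + 1 := ⟨ℓ - 1, by omega⟩
  refine ⟨vGen K (v + 2) * ∏ j ∈ range m, eGen K (v + 2 + 2 * j + 1) (v + 2 + 2 * j + 2),
    mul_mem (vGen_mem_RG _) (prod_eGen_mem_RG (by omega) _ m), ?_⟩
  have hk : ((2 * (m + 1) + 1 : ℕ) : ZMod (2 * (m + 1) + 1)) = 0 := ZMod.natCast_self _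
  push_cast at hk
  have h₁ : v + 2 + 2 * (m : ZMod (2 * (m + 1) + 1)) + 1 = v := by linear_combination hk
  have h₂ : v + 2 + 2 * (m : ZMod (2 * (m + 1) + 1)) + 2 = v + 1 := by linear_combination hk
  rw [monom_one_eq_vGen_mul_prod (v + 2), prod_range_succ, h₁, h₂]
  ring

theorem mem_omegaCycle_iff {k : ℕ} {u : RG K (cycleG k)} :
    u ∈ omegaCycle K k ↔ (∀ C, IsMinVertexCover (cycleG k) C → u ∈ PC K (cycleG k) C) ∧
      u ∈ P0 K (cycleG k) ∧ ∀ i, u ∈ Qi K (cycleG k) i := by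
  simp [omegaCycle, Submodule.mem_iInf, and_assoc]

theorem exists_monom_one_mem_omegaCycle (hl : 1 ≤ ℓ) :
    ∃ u ∈ omegaCycle K (2 * ℓ + 1),
      (u : Amb K (ZMod (2 * ℓ + 1))) = monom K (fun _ => 1) (ℓ + 1) := by
  obtain ⟨r₀, hr₀, h₀⟩ := exists_monom_one_eq_vGen_mul (K := K) hl 0
  refine ⟨⟨monom K (fun _ => 1) (ℓ + 1), h₀ ▸ mul_mem (vGen_mem_RG 0) hr₀⟩,
    mem_omegaCycle_iff.mpr ⟨fun C hC => ?_, ?_, fun i => ?_⟩, rfl⟩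
  · obtain ⟨v, hv, hv₁⟩ := exists_add_one_mem_of_isVertexCover (by omega) (by simp) hC.1
    obtain ⟨r, hr, h⟩ := exists_monom_one_eq_eGen_mul (K := K) hl v
    have hadj := cycleG_adj_add_one (by omega) v
    refine Subalgebra.mem_span_of_coe_eq_mul (s := ⟨_, eGen_mem_RG hadj⟩)
      ⟨{v, v + 1}, Or.inr (Or.inr ⟨v, v + 1, hadj, rfl⟩), ?_, eGen_eq_faceMon hadj.ne⟩ hr h
    simp [insert_subset_iff, hv, hv₁]
  · exact Subalgebra.mem_span_of_coe_eq_mul (s := ⟨_, vGen_mem_RG 0⟩) (Or.inr ⟨0, rfl⟩) hr₀ h₀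
  · obtain ⟨r, hr, h⟩ := exists_monom_one_eq_vGen_mul (K := K) hl i
    exact Subalgebra.mem_span_of_coe_eq_mul (s := ⟨_, vGen_mem_RG i⟩)
      ⟨{i}, Or.inr (Or.inl ⟨i, rfl⟩), mem_singleton_self i, vGen_eq_faceMon i⟩ hr h

end OddCycle

/-- Let `G` be the odd cycle on `k = 2ℓ+1` vertices and suppose the
canonical module of `R_G` is `ω = (⋂_C P_C) ∩ P₀ ∩ Q₁ ∩ ⋯ ∩ Q_k`.  Then every
monomial of `ω` has `t`-degree at least `ℓ+1`, the unique monomial of `t`-degree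
`ℓ+1` in `ω` is `w₀ = (x₁⋯x_k) t^{ℓ+1}`, and `w₀` does lie in `ω`: the initial degree
of `ω` is `ℓ+1` and `dim_K (ω)_{ℓ+1} = 1`, i.e. `R_G` is pseudo-Gorenstein. -/
theorem stmt17 (K : Type*) [Field K] (ℓ : ℕ) (hl : 1 ≤ ℓ) :
    (∀ u : RG K (cycleG (2 * ℓ + 1)), u ∈ omegaCycle K (2 * ℓ + 1) →
      ∀ (a : ZMod (2 * ℓ + 1) → ℕ) (b : ℕ),
        (u : Amb K (ZMod (2 * ℓ + 1))) = monom K a b → ℓ + 1 ≤ b) ∧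
    (∀ u : RG K (cycleG (2 * ℓ + 1)), u ∈ omegaCycle K (2 * ℓ + 1) →
      ∀ a : ZMod (2 * ℓ + 1) → ℕ,
        (u : Amb K (ZMod (2 * ℓ + 1))) = monom K a (ℓ + 1) →
          (u : Amb K (ZMod (2 * ℓ + 1))) = monom K (fun _ => 1) (ℓ + 1)) ∧
    ∃ u : RG K (cycleG (2 * ℓ + 1)), u ∈ omegaCycle K (2 * ℓ + 1) ∧
      (u : Amb K (ZMod (2 * ℓ + 1))) = monom K (fun _ => 1) (ℓ + 1) := by
  refine ⟨fun u hu a b hab => ?_, fun u hu a hab => ?_, exists_monom_one_mem_omegaCycle hl⟩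
  · obtain ⟨-, -, hQ⟩ := mem_omegaCycle_iff.mp hu
    have hdeg := sum_mul_le_of_monom_mem_RG (w := fun _ => 1) (c := 2) (fun _ => by norm_num)
      (fun _ _ _ => le_rfl) (hab ▸ u.2)
    have hcard : 2 * ℓ + 1 ≤ ∑ i, a i := by
      simpa using Finset.card_nsmul_le_sum Finset.univ a 1 fun i _ => one_le_of_mem_Qi (hQ i) hab
    simp only [mul_one] at hdeg
    omega
  · obtain ⟨hPC, -, hQ⟩ := mem_omegaCycle_iff.mp hu
    rw [hab]
    congr 1
    funext i₀
    refine le_antisymm (not_lt.mp fun h₂ => ?_) (one_le_of_mem_Qi (hQ i₀) hab)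
    obtain ⟨S, hi₀, hcard, hS⟩ := exists_mem_card_eq_isMinVertexCover_compl hl i₀
    have hlt := sum_lt_of_mem_PC_compl hS.1 (hPC _ hS) hab
    have hgt : ∑ _ ∈ S, 1 < ∑ i ∈ S, a i :=
      Finset.sum_lt_sum (fun i _ => one_le_of_mem_Qi (hQ i) hab) ⟨i₀, hi₀, h₂⟩
    simp only [Finset.sum_const, hcard, smul_eq_mul, mul_one] at hgt
    omega
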